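/- arXiv:2410.05032 — 6 statements merged into one kernel-verified Lean document; each statement's English description precedes it below -/
import Mathlib

section
/- Let a, z : ℕ → {0,1} be two deterministic indicator sequences (a(u) indicates an arrival event at the u-th potential arrival epoch, z(u) indicates that the system state just before the u-th potential arrival epoch lies in a fixed set B). Define A(τ) = Σ_{u=1}^{τ} a(u), S(τ) = Σ_{u=1}^{τ} z(u), J(τ) = Σ_{u=1}^{τ} a(u)·z(u). Suppose A(τ) → ∞ and S(τ) → ∞ as τ → ∞, and that the limits λ = lim_{τ→∞} A(τ)/τ and λ_B = lim_{τ→∞} J(τ)/S(τ) exist with λ > 0 and λ_B > 0. Then the limit π^{PA} = lim_{τ→∞} S(τ)/τ exists if and only if the limit π^A = lim_{τ→∞} J(τ)/A(τ) exists, and in that case λ_B · π^{PA} = λ · π^A. -/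
open Filter Finset Topology

/-- Theorem 3.1 (sample-path covariance identity for discrete-time ASTA):
with `A τ = ∑_{u=1}^τ a u`, `S τ = ∑_{u=1}^τ z u`, `J τ = ∑_{u=1}^τ a u * z u`,
if `A → ∞`, `S → ∞`, `A τ / τ → λ > 0` and `J τ / S τ → λ_B > 0`, then
`S τ / τ` converges iff `J τ / A τ` converges, and then `λ_B · π^{PA} = λ · π^A`. -/
theorem basta_theorem_3_1
    (a z : ℕ → ℝ)
    (ha : ∀ u, a u = 0 ∨ a u = 1) (hz : ∀ u, z u = 0 ∨ z u = 1)
    (A S J : ℕ → ℝ)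
    (hA : ∀ τ, A τ = ∑ u ∈ Finset.Icc 1 τ, a u)
    (hS : ∀ τ, S τ = ∑ u ∈ Finset.Icc 1 τ, z u)
    (hJ : ∀ τ, J τ = ∑ u ∈ Finset.Icc 1 τ, a u * z u)
    (hAinf : Tendsto A atTop atTop)
    (hSinf : Tendsto S atTop atTop)
    (lam lamB : ℝ)
    (hlam : Tendsto (fun τ => A τ / (τ : ℝ)) atTop (𝓝 lam))
    (hlamB : Tendsto (fun τ => J τ / S τ) atTop (𝓝 lamB))
    (hlampos : 0 < lam) (hlamBpos : 0 < lamB) :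
    ((∃ piPA, Tendsto (fun τ => S τ / (τ : ℝ)) atTop (𝓝 piPA)) ↔
      (∃ piA, Tendsto (fun τ => J τ / A τ) atTop (𝓝 piA))) ∧
    (∀ piPA piA,
      Tendsto (fun τ => S τ / (τ : ℝ)) atTop (𝓝 piPA) →
      Tendsto (fun τ => J τ / A τ) atTop (𝓝 piA) →
      lamB * piPA = lam * piA) := by

  -- positivity eventualities
  have hApos : ∀ᶠ τ in atTop, 0 < A τ := hAinf.eventually_gt_atTop 0
  have hSpos : ∀ᶠ τ in atTop, 0 < S τ := hSinf.eventually_gt_atTop 0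
  have hτpos : ∀ᶠ τ : ℕ in atTop, 0 < (τ : ℝ) := by
    filter_upwards [eventually_gt_atTop 0] with τ hτ
    exact_mod_cast hτ
  have hJinf : Tendsto J atTop atTop := by
    have h := Tendsto.pos_mul_atTop hlamBpos hlamB hSinf
    refine h.congr' ?_
    filter_upwards [hSpos] with τ hτ
    field_simp
  have hJpos : ∀ᶠ τ in atTop, 0 < J τ := hJinf.eventually_gt_atTop 0
  -- key algebraic identities
  have key1 : ∀ᶠ τ in atTop,
      (J τ / S τ) * (S τ / (τ : ℝ)) / (A τ / (τ : ℝ)) = J τ / A τ := by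
    filter_upwards [hApos, hSpos, hτpos] with τ h1 h2 h3
    field_simp
  have key2 : ∀ᶠ τ in atTop,
      (J τ / A τ) * (A τ / (τ : ℝ)) / (J τ / S τ) = S τ / (τ : ℝ) := by
    filter_upwards [hApos, hJpos, hτpos] with τ h1 h2 h3
    field_simp
  have fwd : ∀ piPA, Tendsto (fun τ => S τ / (τ : ℝ)) atTop (𝓝 piPA) →
      Tendsto (fun τ => J τ / A τ) atTop (𝓝 (lamB * piPA / lam)) := by
    intro piPA hpi
    exact ((hlamB.mul hpi).div hlam hlampos.ne').congr' key1
  have bwd : ∀ piA, Tendsto (fun τ => J τ / A τ) atTop (𝓝 piA) →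
      Tendsto (fun τ => S τ / (τ : ℝ)) atTop (𝓝 (piA * lam / lamB)) := by
    intro piA hpi
    exact ((hpi.mul hlam).div hlamB hlamBpos.ne').congr' key2
  constructor
  · constructor
    · rintro ⟨piPA, hpi⟩; exact ⟨_, fwd piPA hpi⟩
    · rintro ⟨piA, hpi⟩; exact ⟨_, bwd piA hpi⟩
  · intro piPA piA h1 h2
    have := tendsto_nhds_unique (fwd piPA h1) h2
    field_simp at this
    linarith [this]
end

section
/- Let t : ℕ → ℕ be a strictly increasing sequence of arrival times with lim_{n→∞} n / t(n) = λ, and let X : ℕ → ℝ be a bounded sequence of rewards with lim_{n→∞} (1/n) Σ_{k=1}^{n} X(k) = X̄. Then lim_{τ→∞} (1/τ) Σ_{k : t(k) ≤ τ} X(k) = λ · X̄. -/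
open Filter Finset Topology

/-- Discrete-time deterministic renewal-reward relation `Y = λX` (El-Taha & Stidham):
if `t` is a strictly increasing sequence of arrival times with `n / t n → λ`, and the
bounded rewards `X` satisfy `(1/n) ∑_{k=1}^n X k → X̄`, then the cumulative reward per
unit time converges: `(1/τ) ∑_{k : t k ≤ τ} X k → λ · X̄`. -/
theorem renewal_reward_Y_eq_lambda_X
    (t : ℕ → ℕ) (ht : StrictMono t)
    (lam Xbar : ℝ) (X : ℕ → ℝ)
    (hlam : Tendsto (fun n : ℕ => (n : ℝ) / (t n : ℝ)) atTop (𝓝 lam))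
    (hbdd : ∃ M : ℝ, ∀ k, |X k| ≤ M)
    (hX : Tendsto (fun n => (∑ k ∈ Finset.Icc 1 n, X k) / (n : ℝ)) atTop (𝓝 Xbar)) :
    Tendsto
      (fun τ => (∑ k ∈ (Finset.Icc 1 τ).filter (fun k => t k ≤ τ), X k) / (τ : ℝ))
      atTop (𝓝 (lam * Xbar)) := by
  classical
  set N : ℕ → ℕ := fun τ => Nat.findGreatest (fun k => t k ≤ τ) τ with hNdef
  have htk : ∀ k, k ≤ t k := fun k => ht.le_apply
  -- N tends to infinity
  have hNtend : Tendsto N atTop atTop := by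
    rw [tendsto_atTop]
    intro K
    filter_upwards [eventually_ge_atTop (t K)] with τ hτ
    exact Nat.le_findGreatest ((htk K).trans hτ) hτ
  -- when N τ ≠ 0, t (N τ) ≤ τ
  have hNspec : ∀ τ, N τ ≠ 0 → t (N τ) ≤ τ := by
    intro τ h
    have h2 := mt Nat.findGreatest_eq_zero_iff.mpr h
    push_neg at h2
    obtain ⟨m, _, hm2, hm3⟩ := h2
    exact Nat.findGreatest_spec (P := fun k => t k ≤ τ) hm2 hm3
  -- the filtered set is an interval
  have hset : ∀ τ, (Finset.Icc 1 τ).filter (fun k => t k ≤ τ) = Finset.Icc 1 (N τ) := by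
    intro τ
    ext k
    simp only [mem_filter, mem_Icc]
    constructor
    · rintro ⟨⟨h1, _⟩, h2⟩
      exact ⟨h1, Nat.le_findGreatest ((htk k).trans h2) h2⟩
    · rintro ⟨h1, h2⟩
      have hN0 : N τ ≠ 0 := by omega
      have htN : t (N τ) ≤ τ := hNspec τ hN0
      have htkτ : t k ≤ τ := le_trans (ht.monotone h2) htN
      exact ⟨⟨h1, (htk k).trans htkτ⟩, htkτ⟩
  -- τ < t (N τ + 1)
  have hNlt : ∀ τ, τ < t (N τ + 1) := by
    intro τ
    by_cases h : N τ + 1 ≤ τ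
    · have := Nat.findGreatest_is_greatest (P := fun k => t k ≤ τ) (n := τ)
        (k := N τ + 1) (Nat.lt_succ_self _) h
      omega
    · have : τ ≤ N τ := by omega
      have := htk (N τ + 1)
      omega
  -- N τ / τ → lam by squeeze
  have hupper : Tendsto (fun τ => (N τ : ℝ) / (t (N τ) : ℝ)) atTop (𝓝 lam) :=
    hlam.comp hNtend
  have hshift : Tendsto (fun n : ℕ => ((n : ℝ) + 1) / (t (n + 1) : ℝ)) atTop (𝓝 lam) := by
    have := hlam.comp (tendsto_add_atTop_nat 1)
    simpa [Function.comp_def] using this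
  have hratio : Tendsto (fun n : ℕ => (n : ℝ) / ((n : ℝ) + 1)) atTop (𝓝 1) := by
    have h1 : Tendsto (fun n : ℕ => 1 - 1 / ((n : ℝ) + 1)) atTop (𝓝 (1 - 0)) :=
      (tendsto_const_nhds).sub (tendsto_one_div_add_atTop_nhds_zero_nat)
    rw [sub_zero] at h1
    apply h1.congr
    intro n
    have hn : ((n : ℝ) + 1) ≠ 0 := by positivity
    field_simp
    ring
  have hlower : Tendsto (fun n : ℕ => (n : ℝ) / (t (n + 1) : ℝ)) atTop (𝓝 lam) := by
    have := hratio.mul hshift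
    rw [one_mul] at this
    apply this.congr
    intro n
    have hn : ((n : ℝ) + 1) ≠ 0 := by positivity
    rw [div_mul_div_cancel₀ hn]
  have hNev : ∀ᶠ τ : ℕ in atTop, 1 ≤ N τ := hNtend.eventually_ge_atTop 1
  have hsq : Tendsto (fun τ => (N τ : ℝ) / (τ : ℝ)) atTop (𝓝 lam) := by
    apply tendsto_of_tendsto_of_tendsto_of_le_of_le' (hlower.comp hNtend) hupper
    · filter_upwards [hNev, eventually_ge_atTop 1] with τ hN1 hτ1
      have hlt : (τ : ℝ) < (t (N τ + 1) : ℝ) := by exact_mod_cast hNlt τ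
      have hτpos : (0 : ℝ) < (τ : ℝ) := by exact_mod_cast hτ1
      exact div_le_div_of_nonneg_left (by positivity) hτpos hlt.le
    · filter_upwards [hNev, eventually_ge_atTop 1] with τ hN1 hτ1
      have htN : (t (N τ) : ℝ) ≤ (τ : ℝ) := by
        exact_mod_cast hNspec τ (by omega)
      have htNpos : (0 : ℝ) < (t (N τ) : ℝ) := by
        have : 1 ≤ t (N τ) := le_trans hN1 (htk _)
        exact_mod_cast this
      exact div_le_div_of_nonneg_left (by positivity) htNpos htN
  -- combine
  have hXcomp : Tendsto (fun τ => (∑ k ∈ Finset.Icc 1 (N τ), X k) / (N τ : ℝ))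
      atTop (𝓝 Xbar) := hX.comp hNtend
  have hmul := hXcomp.mul hsq
  rw [mul_comm lam Xbar]
  apply hmul.congr'
  filter_upwards [hNev] with τ hN1
  have hNne : ((N τ : ℝ)) ≠ 0 := by
    have : (0 : ℕ) < N τ := hN1
    exact_mod_cast this.ne'
  rw [hset τ]
  exact div_mul_div_cancel₀ hNne
end

section
/- Let S be a type, Z : ℕ → S a state sequence, and a : ℕ → {0,1} an arrival indicator sequence with A(τ) = Σ_{u=1}^{τ} a(u) → ∞ and λ = lim_{τ→∞} A(τ)/τ existing with λ > 0. For a set B ⊆ S write z_B(u) for the indicator that Z(u) ∈ B, S_B(τ) = Σ_{u=1}^{τ} z_B(u), J_B(τ) = Σ_{u=1}^{τ} a(u)·z_B(u). Assume that for every B ⊆ S with S_B(τ) → ∞ the limits λ(B) = lim J_B(τ)/S_B(τ), π^{PA}(B) = lim S_B(τ)/τ, and π^A(B) = lim J_B(τ)/A(τ) all exist, and that π^{PA}(B) > 0 for every nonempty such B. Then the following are equivalent: (i) there is a constant c such that λ(B) = c for all such B; (ii) λ(B) = λ for all such B; (iii) π^A(B) = π^{PA}(B) for all such B. -/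
open Filter Finset Topology

/-- Indicator (as a real number) that the state at epoch `u` lies in the set `B`. -/
noncomputable def stateInd {σ : Type*} (Z : ℕ → σ) (B : Set σ) (u : ℕ) : ℝ :=
  Set.indicator B (fun _ => (1 : ℝ)) (Z u)


private lemma basta_div_chain (J S : ℕ → ℝ) (L M : ℝ)
    (hS : Tendsto S atTop atTop)
    (h1 : Tendsto (fun τ => J τ / S τ) atTop (𝓝 L))
    (h2 : Tendsto (fun τ => S τ / (τ : ℝ)) atTop (𝓝 M)) :
    Tendsto (fun τ : ℕ => J τ / (τ : ℝ)) atTop (𝓝 (L * M)) := by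
  refine (h1.mul h2).congr' ?_
  filter_upwards [hS.eventually_gt_atTop 0, eventually_gt_atTop 0] with τ hSτ hτ
  have hτ' : (τ : ℝ) ≠ 0 := Nat.cast_ne_zero.mpr hτ.ne'
  field_simp

/-- Three-way equivalence of Corollary 3.2: (i) the state-dependent arrival frequency
`λ(B)` is independent of `B`; (ii) `λ(B) = λ` for all `B`; (iii) the arrival-average
distribution `π^A` coincides with the time-average distribution `π^{PA}` taken at
potential arrival epochs. Sets `B` range over those state sets whose occupation time
`S_B(τ) = ∑_{u=1}^τ 1{Z u ∈ B}` tends to infinity. -/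
theorem basta_cor_3_2_tfae {σ : Type*} (Z : ℕ → σ) (a : ℕ → ℝ)
    (ha : ∀ u, a u = 0 ∨ a u = 1)
    (lam : ℝ)
    (hAinf : Tendsto (fun τ => ∑ u ∈ Finset.Icc 1 τ, a u) atTop atTop)
    (hlam : Tendsto (fun τ => (∑ u ∈ Finset.Icc 1 τ, a u) / (τ : ℝ)) atTop (𝓝 lam))
    (hlampos : 0 < lam)
    (lamB piPA piA : Set σ → ℝ)
    (hlims : ∀ B : Set σ,
      Tendsto (fun τ => ∑ u ∈ Finset.Icc 1 τ, stateInd Z B u) atTop atTop →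
      (Tendsto (fun τ => (∑ u ∈ Finset.Icc 1 τ, a u * stateInd Z B u) /
          (∑ u ∈ Finset.Icc 1 τ, stateInd Z B u)) atTop (𝓝 (lamB B)) ∧
       Tendsto (fun τ => (∑ u ∈ Finset.Icc 1 τ, stateInd Z B u) / (τ : ℝ))
          atTop (𝓝 (piPA B)) ∧
       Tendsto (fun τ => (∑ u ∈ Finset.Icc 1 τ, a u * stateInd Z B u) /
          (∑ u ∈ Finset.Icc 1 τ, a u)) atTop (𝓝 (piA B))))
    (hpos : ∀ B : Set σ, B.Nonempty →
      Tendsto (fun τ => ∑ u ∈ Finset.Icc 1 τ, stateInd Z B u) atTop atTop →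
      0 < piPA B) :
    List.TFAE
      [ ∃ c : ℝ, ∀ B : Set σ,
          Tendsto (fun τ => ∑ u ∈ Finset.Icc 1 τ, stateInd Z B u) atTop atTop →
          lamB B = c,
        ∀ B : Set σ,
          Tendsto (fun τ => ∑ u ∈ Finset.Icc 1 τ, stateInd Z B u) atTop atTop →
          lamB B = lam,
        ∀ B : Set σ,
          Tendsto (fun τ => ∑ u ∈ Finset.Icc 1 τ, stateInd Z B u) atTop atTop →
          piA B = piPA B ] := by
  
  have huniv : ∀ u, stateInd Z Set.univ u = 1 := fun u => by simp [stateInd]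
  have hSuniv : ∀ τ : ℕ, ∑ u ∈ Finset.Icc 1 τ, stateInd Z Set.univ u = τ := by
    intro τ; simp [huniv, Nat.card_Icc]
  have hBuniv : Tendsto (fun τ => ∑ u ∈ Finset.Icc 1 τ, stateInd Z Set.univ u)
      atTop atTop := by
    simp only [hSuniv]; exact tendsto_natCast_atTop_atTop
  obtain ⟨h1u, -, -⟩ := hlims Set.univ hBuniv
  have hlamuniv : lamB Set.univ = lam := by
    refine tendsto_nhds_unique (h1u.congr fun τ => ?_) hlam
    simp [huniv, hSuniv]
  have hrel : ∀ B : Set σ,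
      Tendsto (fun τ => ∑ u ∈ Finset.Icc 1 τ, stateInd Z B u) atTop atTop →
      piA B * lam = lamB B * piPA B := by
    intro B hB
    obtain ⟨h1, h2, h3⟩ := hlims B hB
    have t1 := basta_div_chain (fun τ => ∑ u ∈ Finset.Icc 1 τ, a u * stateInd Z B u)
      (fun τ => ∑ u ∈ Finset.Icc 1 τ, a u) (piA B) lam hAinf h3 hlam
    have t2 := basta_div_chain (fun τ => ∑ u ∈ Finset.Icc 1 τ, a u * stateInd Z B u)
      (fun τ => ∑ u ∈ Finset.Icc 1 τ, stateInd Z B u) (lamB B) (piPA B) hB h1 h2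
    exact tendsto_nhds_unique t1 t2
  have hne : ∀ B : Set σ,
      Tendsto (fun τ => ∑ u ∈ Finset.Icc 1 τ, stateInd Z B u) atTop atTop →
      B.Nonempty := by
    intro B hB
    by_contra hn
    rw [Set.not_nonempty_iff_eq_empty] at hn
    subst hn
    have := hB.eventually_gt_atTop 0
    simp [stateInd] at this
    obtain ⟨n, hn⟩ := this
    exact lt_irrefl n (hn n)
  tfae_have 1 → 2
  · rintro ⟨c, hc⟩ B hB
    rw [hc B hB, ← hlamuniv, hc Set.univ hBuniv]
  tfae_have 2 → 3
  · intro h B hB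
    have := hrel B hB
    rw [h B hB] at this
    have h2 : piA B * lam = piPA B * lam := by linarith [this]
    exact mul_right_cancel₀ hlampos.ne' h2
  tfae_have 3 → 1
  · intro h
    refine ⟨lam, fun B hB => ?_⟩
    have := hrel B hB
    rw [h B hB] at this
    have hp := hpos B (hne B hB) hB
    have h2 : lamB B * piPA B = lam * piPA B := by linarith [this]
    exact mul_right_cancel₀ hp.ne' h2
  tfae_finish
end

section
/- Let (Ω, F, P) be a probability space with a filtration (F_u)_{u∈ℕ}, let α ∈ (0,1), and let N : ℕ → Ω → {0,1} be a sequence of random variables such that N(u) is F_u-measurable and E[N(u) | F_{u-1}] = α almost surely for all u ≥ 1 (Bernoulli arrivals satisfying the lack of anticipation assumption). Let z : ℕ → Ω → {0,1} be a sequence such that z(u) is F_{u-1}-measurable for all u ≥ 1 (the state observed just before the u-th potential arrival epoch is independent of future arrivals). Then almost surely on the event that lim_{τ→∞} (1/τ) Σ_{u=1}^{τ} z(u) exists and equals π^{PA}, the limit lim_{τ→∞} (Σ_{u=1}^{τ} N(u) z(u)) / (Σ_{u=1}^{τ} N(u)) exists and equals π^{PA}. -/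
open Filter Finset Topology MeasureTheory

/-- Deterministic gap-filling: if S has increments bounded by 1 and S(k²)/k² → 0
then S(τ)/τ → 0. -/
lemma basta_gap (S : ℕ → ℝ)
    (hinc : ∀ a b : ℕ, a ≤ b → |S b - S a| ≤ (b : ℝ) - a)
    (h : Tendsto (fun k : ℕ => S (k ^ 2) / ((k : ℝ) ^ 2)) atTop (𝓝 0)) :
    Tendsto (fun τ : ℕ => S τ / (τ : ℝ)) atTop (𝓝 0) := by
  have hsqrt : Tendsto (fun τ : ℕ => Nat.sqrt τ) atTop atTop := by
    refine tendsto_atTop_atTop.2 fun b => ⟨b * b, fun τ hτ => Nat.le_sqrt.2 hτ⟩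
  have hG : Tendsto (fun k : ℕ => |S (k ^ 2) / ((k : ℝ) ^ 2)| + 2 / (k : ℝ)) atTop (𝓝 0) := by
    have h1 : Tendsto (fun k : ℕ => |S (k ^ 2) / ((k : ℝ) ^ 2)|) atTop (𝓝 0) := by
      simpa using h.abs
    have h2 : Tendsto (fun k : ℕ => 2 / (k : ℝ)) atTop (𝓝 0) :=
      tendsto_const_div_atTop_nhds_zero_nat 2
    simpa using h1.add h2
  have habs : Tendsto (fun τ : ℕ => |S τ / (τ : ℝ)|) atTop (𝓝 0) := by
    refine squeeze_zero' (Eventually.of_forall fun τ => abs_nonneg _)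
      ?_ (hG.comp hsqrt)
    filter_upwards [eventually_ge_atTop 1] with τ hτ
    set k := Nat.sqrt τ with hk
    have hk1 : 1 ≤ k := Nat.one_le_iff_ne_zero.2 (by
      simp [hk, Nat.sqrt_eq_zero]; omega)
    have hk2 : k ^ 2 ≤ τ := by simpa [pow_two] using Nat.sqrt_le' τ
    have hk3 : τ ≤ k ^ 2 + 2 * k := by
      have := Nat.lt_succ_sqrt' τ
      nlinarith [Nat.lt_succ_sqrt' τ]
    have hτpos : (0 : ℝ) < τ := by exact_mod_cast hτ
    have hkpos : (0 : ℝ) < (k : ℝ) ^ 2 := by positivity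
    have hle : ((k : ℝ) ^ 2) ≤ (τ : ℝ) := by exact_mod_cast hk2
    have hd : |S τ - S (k ^ 2)| ≤ (τ : ℝ) - (k ^ 2 : ℕ) := hinc _ _ hk2
    have hbound : |S τ| ≤ |S (k ^ 2)| + 2 * k := by
      have : (τ : ℝ) - ((k : ℝ) ^ 2) ≤ 2 * k := by
        have : (τ : ℝ) ≤ (k : ℝ) ^ 2 + 2 * k := by exact_mod_cast hk3
        linarith
      calc |S τ| ≤ |S (k ^ 2)| + |S τ - S (k ^ 2)| := by
            have := abs_add_le (S (k ^ 2)) (S τ - S (k ^ 2)); simpa using this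
        _ ≤ |S (k ^ 2)| + ((τ : ℝ) - ((k : ℝ) ^ 2)) := by push_cast at hd ⊢; linarith
        _ ≤ |S (k ^ 2)| + 2 * k := by linarith
    have : |S τ / (τ : ℝ)| = |S τ| / τ := by
      rw [abs_div, abs_of_pos hτpos]
    rw [this]
    have hkR : (0 : ℝ) < k := by exact_mod_cast hk1
    have h1 : |S τ| / τ ≤ (|S (k ^ 2)| + 2 * k) / τ := by gcongr
    have hA : |S (k ^ 2)| / (τ : ℝ) ≤ |S (k ^ 2)| / ((k : ℝ) ^ 2) := by
      gcongr

    have hB : (2 * (k : ℝ)) / τ ≤ 2 / k := by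
      rw [div_le_div_iff₀ hτpos hkR]
      nlinarith
    have h3 : |S (k ^ 2)| / ((k : ℝ) ^ 2) = |S (k ^ 2) / ((k : ℝ) ^ 2)| := by
      rw [abs_div, abs_of_pos hkpos]
    calc |S τ| / τ ≤ (|S (k ^ 2)| + 2 * k) / τ := h1
      _ = |S (k ^ 2)| / (τ : ℝ) + (2 * (k : ℝ)) / τ := by rw [add_div]
      _ ≤ |S (k ^ 2)| / ((k : ℝ) ^ 2) + 2 / k := add_le_add hA hB
      _ = |S (k ^ 2) / ((k : ℝ) ^ 2)| + 2 / k := by rw [h3]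
  exact tendsto_zero_iff_abs_tendsto_zero _ |>.2 habs


lemma basta_mds_lln {Ω : Type*} [mΩ : MeasurableSpace Ω] (P : Measure Ω)
    [IsProbabilityMeasure P]
    (F : ℕ → MeasurableSpace Ω) (hFmono : Monotone F) (hFle : ∀ u, F u ≤ mΩ)
    (f : ℕ → Ω → ℝ)
    (hbdd : ∀ u ω, |f u ω| ≤ 1)
    (hmeas : ∀ u, Measurable[F u] (f u))
    (hcond : ∀ u, 1 ≤ u → P[f u | F (u - 1)] =ᵐ[P] fun _ => (0 : ℝ)) :
    ∀ᵐ ω ∂P, Tendsto (fun τ : ℕ => (∑ u ∈ Finset.Icc 1 τ, f u ω) / (τ : ℝ))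
      atTop (𝓝 0) := by
  -- basic measurability / integrability
  have hmeas' : ∀ u, Measurable (f u) := fun u => (hmeas u).mono (hFle u) le_rfl
  have hint : ∀ u, Integrable (f u) P := fun u =>
    (integrable_const (1 : ℝ)).mono' (hmeas' u).aestronglyMeasurable
      (Eventually.of_forall fun ω => by simpa using hbdd u ω)
  have hintmul : ∀ u v, Integrable (fun ω => f u ω * f v ω) P := fun u v =>
    (integrable_const (1 : ℝ)).mono' ((hmeas' u).mul (hmeas' v)).aestronglyMeasurable
      (Eventually.of_forall fun ω => by
        have := mul_le_one₀ (hbdd u ω) (abs_nonneg _) (hbdd v ω)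
        simpa [abs_mul] using this)
  -- orthogonality
  have horth : ∀ u v : ℕ, 1 ≤ u → u < v → ∫ ω, f u ω * f v ω ∂P = 0 := by
    intro u v hu huv
    have hmle : F u ≤ F (v - 1) := hFmono (by omega)
    have hsm : StronglyMeasurable[F (v - 1)] (f u) :=
      ((hmeas u).mono hmle le_rfl).stronglyMeasurable
    have hpull : P[fun ω => f u ω * f v ω | F (v - 1)] =ᵐ[P]
        fun ω => f u ω * (P[f v | F (v - 1)]) ω :=
      condExp_mul_of_stronglyMeasurable_left hsm (hintmul u v) (hint v)
    have hzero : P[fun ω => f u ω * f v ω | F (v - 1)] =ᵐ[P] fun _ => (0 : ℝ) := by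
      filter_upwards [hpull, hcond v (by omega)] with ω h1 h2
      rw [h1, h2]; ring
    calc ∫ ω, f u ω * f v ω ∂P
        = ∫ ω, (P[fun ω => f u ω * f v ω | F (v - 1)]) ω ∂P :=
          (integral_condExp (hFle _)).symm
      _ = 0 := by rw [integral_congr_ae hzero]; simp
  -- second moment bound
  have hS2 : ∀ τ : ℕ, ∫ ω, (∑ u ∈ Finset.Icc 1 τ, f u ω) ^ 2 ∂P ≤ τ := by
    intro τ
    have hexp : ∀ ω, (∑ u ∈ Finset.Icc 1 τ, f u ω) ^ 2 =
        ∑ u ∈ Finset.Icc 1 τ, ∑ v ∈ Finset.Icc 1 τ, f u ω * f v ω := by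
      intro ω; rw [sq, Finset.sum_mul_sum]
    calc ∫ ω, (∑ u ∈ Finset.Icc 1 τ, f u ω) ^ 2 ∂P
        = ∑ u ∈ Finset.Icc 1 τ, ∑ v ∈ Finset.Icc 1 τ, ∫ ω, f u ω * f v ω ∂P := by
          simp_rw [hexp]
          rw [integral_finset_sum _ fun u _ => integrable_finset_sum _ fun v _ => hintmul u v]
          exact Finset.sum_congr rfl fun u _ =>
            integral_finset_sum _ fun v _ => hintmul u v
      _ = ∑ u ∈ Finset.Icc 1 τ, ∫ ω, f u ω * f u ω ∂P := by
          refine Finset.sum_congr rfl fun u hu => ?_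
          rw [Finset.mem_Icc] at hu
          refine Finset.sum_eq_single_of_mem u (Finset.mem_Icc.2 ⟨hu.1, hu.2⟩) ?_
          intro v hv hvu
          rw [Finset.mem_Icc] at hv
          rcases lt_or_gt_of_ne hvu with h | h
          · rw [show (fun ω => f u ω * f v ω) = fun ω => f v ω * f u ω from
              funext fun ω => mul_comm _ _]
            exact horth v u hv.1 h
          · exact horth u v hu.1 h
      _ ≤ ∑ u ∈ Finset.Icc 1 τ, 1 := by
          refine Finset.sum_le_sum fun u _ => ?_
          calc ∫ ω, f u ω * f u ω ∂P ≤ ∫ _ω, (1 : ℝ) ∂P := by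
                refine integral_mono (hintmul u u) (integrable_const 1) fun ω => ?_
                have := hbdd u ω
                nlinarith [abs_nonneg (f u ω), neg_abs_le (f u ω), le_abs_self (f u ω)]
            _ = 1 := by simp
      _ ≤ τ := by simp [Nat.card_Icc]
  -- notation
  set q : ℕ → Ω → ℝ := fun k ω => (∑ u ∈ Finset.Icc 1 (k ^ 2), f u ω) / ((k : ℝ) ^ 2)
    with hqdef
  set g : ℕ → Ω → ℝ := fun k ω => q k ω ^ 2 with hgdef
  have hSmeas : ∀ τ : ℕ, Measurable fun ω => ∑ u ∈ Finset.Icc 1 τ, f u ω := fun τ =>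
    Finset.measurable_sum _ fun u _ => hmeas' u
  have hgmeas : ∀ k, Measurable (g k) := fun k =>
    (((hSmeas (k ^ 2)).div_const _).pow_const 2)
  have hgnn : ∀ k ω, 0 ≤ g k ω := fun k ω => sq_nonneg _
  have hgbd : ∀ k ω, g k ω ≤ 1 := by
    intro k ω
    rcases Nat.eq_zero_or_pos k with hk | hk
    · simp [hgdef, hqdef, hk]
    have hSb : |∑ u ∈ Finset.Icc 1 (k ^ 2), f u ω| ≤ (k : ℝ) ^ 2 := by
      calc |∑ u ∈ Finset.Icc 1 (k ^ 2), f u ω| ≤ ∑ u ∈ Finset.Icc 1 (k ^ 2), |f u ω| :=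
            Finset.abs_sum_le_sum_abs _ _
        _ ≤ ∑ _u ∈ Finset.Icc 1 (k ^ 2), (1 : ℝ) := Finset.sum_le_sum fun u _ => hbdd u ω
        _ = ((k : ℝ) ^ 2) := by simp [Nat.card_Icc]
    have hkpos : (0 : ℝ) < (k : ℝ) ^ 2 := by positivity
    have : |q k ω| ≤ 1 := by
      rw [hqdef, abs_div, abs_of_pos hkpos, div_le_one hkpos]
      exact hSb
    show q k ω ^ 2 ≤ 1
    rw [← sq_abs]
    nlinarith [abs_nonneg (q k ω)]
  have hgint : ∀ k, Integrable (g k) P := fun k =>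
    (integrable_const (1 : ℝ)).mono' (hgmeas k).aestronglyMeasurable
      (Eventually.of_forall fun ω => by
        rw [Real.norm_eq_abs, abs_of_nonneg (hgnn k ω)]; exact hgbd k ω)
  have hgI : ∀ k : ℕ, ∫ ω, g k ω ∂P ≤ 1 / (k : ℝ) ^ 2 := by
    intro k
    rcases Nat.eq_zero_or_pos k with hk | hk
    · simp [hgdef, hqdef, hk]
    have hkpos : (0 : ℝ) < (k : ℝ) ^ 2 := by positivity
    have : ∫ ω, g k ω ∂P = (∫ ω, (∑ u ∈ Finset.Icc 1 (k ^ 2), f u ω) ^ 2 ∂P)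
        / ((k : ℝ) ^ 2) ^ 2 := by
      simp_rw [hgdef, hqdef, div_pow]
      exact integral_div _ _
    rw [this]
    have hnum := hS2 (k ^ 2)
    have : (∫ ω, (∑ u ∈ Finset.Icc 1 (k ^ 2), f u ω) ^ 2 ∂P) / ((k : ℝ) ^ 2) ^ 2
        ≤ ((k ^ 2 : ℕ) : ℝ) / ((k : ℝ) ^ 2) ^ 2 := by gcongr
    refine this.trans (le_of_eq ?_)
    push_cast
    field_simp
  have hsummable : Summable (fun k : ℕ => 1 / (k : ℝ) ^ 2) := by
    simpa using Real.summable_one_div_nat_pow.2 one_lt_two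
  have key : ∫⁻ ω, ∑' k, ENNReal.ofReal (g k ω) ∂P < ⊤ := by
    rw [lintegral_tsum fun k => ((hgmeas k).ennreal_ofReal).aemeasurable]
    calc ∑' k, ∫⁻ ω, ENNReal.ofReal (g k ω) ∂P
        ≤ ∑' k : ℕ, ENNReal.ofReal (1 / (k : ℝ) ^ 2) := by
          refine ENNReal.tsum_le_tsum fun k => ?_
          rw [← ofReal_integral_eq_lintegral_ofReal (hgint k)
            (Eventually.of_forall (hgnn k))]
          exact ENNReal.ofReal_le_ofReal (hgI k)
      _ = ENNReal.ofReal (∑' k : ℕ, 1 / (k : ℝ) ^ 2) :=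
          (ENNReal.ofReal_tsum_of_nonneg (fun k => by positivity) hsummable).symm
      _ < ⊤ := ENNReal.ofReal_lt_top
  have hfin : ∀ᵐ ω ∂P, ∑' k, ENNReal.ofReal (g k ω) < ⊤ :=
    ae_lt_top (Measurable.ennreal_tsum fun k => (hgmeas k).ennreal_ofReal) key.ne
  filter_upwards [hfin] with ω hω
  -- along squares
  have hsum : Summable fun k => g k ω := by
    have h1 := ENNReal.summable_toReal hω.ne
    have h2 : (fun k => (ENNReal.ofReal (g k ω)).toReal) = fun k => g k ω :=
      funext fun k => ENNReal.toReal_ofReal (hgnn k ω)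
    rwa [h2] at h1
  have h0 : Tendsto (fun k => g k ω) atTop (𝓝 0) := hsum.tendsto_atTop_zero
  have hqlim : Tendsto (fun k => q k ω) atTop (𝓝 0) := by
    have habs : Tendsto (fun k => |q k ω|) atTop (𝓝 0) := by
      have h3 : Tendsto (fun k => Real.sqrt (g k ω)) atTop (𝓝 (Real.sqrt 0)) :=
        (Real.continuous_sqrt.tendsto 0).comp h0
      simpa [hgdef, Real.sqrt_sq_eq_abs] using h3
    exact (tendsto_zero_iff_abs_tendsto_zero _).2 habs
  -- gap filling
  refine basta_gap (fun τ => ∑ u ∈ Finset.Icc 1 τ, f u ω) ?_ hqlim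
  intro a b hab
  have hIoc : ∀ τ : ℕ, ∑ u ∈ Finset.Icc 1 τ, f u ω = ∑ u ∈ Finset.Ioc 0 τ, f u ω := by
    intro τ; rw [← Finset.Icc_add_one_left_eq_Ioc, zero_add]
  have hsplit : ∑ u ∈ Finset.Ioc 0 a, f u ω + ∑ u ∈ Finset.Ioc a b, f u ω
      = ∑ u ∈ Finset.Ioc 0 b, f u ω :=
    Finset.sum_Ioc_consecutive _ (Nat.zero_le a) hab
  show |(∑ u ∈ Finset.Icc 1 b, f u ω) - ∑ u ∈ Finset.Icc 1 a, f u ω| ≤ (b : ℝ) - a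
  rw [hIoc a, hIoc b, ← hsplit]
  have hb : |∑ u ∈ Finset.Ioc a b, f u ω| ≤ ((b - a : ℕ) : ℝ) := by
    calc |∑ u ∈ Finset.Ioc a b, f u ω| ≤ ∑ u ∈ Finset.Ioc a b, |f u ω| :=
        Finset.abs_sum_le_sum_abs _ _
      _ ≤ ∑ _u ∈ Finset.Ioc a b, (1 : ℝ) := Finset.sum_le_sum fun u _ => hbdd u ω
      _ = ((b - a : ℕ) : ℝ) := by simp [Nat.card_Ioc]
  have hcast : ((b - a : ℕ) : ℝ) = (b : ℝ) - a := by
    rw [Nat.cast_sub hab]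
  simpa [add_sub_cancel_left, hcast] using hb

private lemma basta_div_div (a b c : ℝ) (hc : c ≠ 0) : (a / c) / (b / c) = a / b := by
  rcases eq_or_ne b 0 with rfl | hb
  · simp
  · field_simp

/-- Stochastic BASTA (Corollary 3.3): on a probability space with filtration `F`, if the
arrival indicators `N u` are `F u`-measurable 0-1 random variables with
`E[N u | F (u-1)] = α` a.s. (Bernoulli arrivals satisfying LAA), and the state indicators
`z u` are `F (u-1)`-measurable (the state just before the `u`-th potential arrival epoch
does not anticipate the arrival), then almost surely, on the event that the time average
`(1/τ) ∑_{u=1}^τ z u` converges to `π^{PA}`, the arrival average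
`(∑_{u=1}^τ N u · z u) / (∑_{u=1}^τ N u)` converges to `π^{PA}` as well. -/
theorem basta_cor_3_3
    {Ω : Type*} [mΩ : MeasurableSpace Ω] (P : Measure Ω) [IsProbabilityMeasure P]
    (F : ℕ → MeasurableSpace Ω) (hFmono : Monotone F) (hFle : ∀ u, F u ≤ mΩ)
    (α : ℝ) (hα0 : 0 < α) (hα1 : α < 1)
    (N z : ℕ → Ω → ℝ)
    (hN01 : ∀ u ω, N u ω = 0 ∨ N u ω = 1)
    (hz01 : ∀ u ω, z u ω = 0 ∨ z u ω = 1)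
    (hNmeas : ∀ u, Measurable[F u] (N u))
    (hLAA : ∀ u, 1 ≤ u → P[N u | F (u - 1)] =ᵐ[P] fun _ => α)
    (hzmeas : ∀ u, 1 ≤ u → Measurable[F (u - 1)] (z u))
    (piPA : ℝ) :
    ∀ᵐ ω ∂P,
      Tendsto (fun τ => (∑ u ∈ Finset.Icc 1 τ, z u ω) / (τ : ℝ)) atTop (𝓝 piPA) →
      Tendsto (fun τ => (∑ u ∈ Finset.Icc 1 τ, N u ω * z u ω) /
        (∑ u ∈ Finset.Icc 1 τ, N u ω)) atTop (𝓝 piPA) := by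
  set f1 : ℕ → Ω → ℝ := fun u ω => N u ω - α with hf1
  set f2 : ℕ → Ω → ℝ := fun u ω => if u = 0 then 0 else (N u ω - α) * z u ω with hf2
  have hNbd : ∀ u ω, |N u ω - α| ≤ 1 := by
    intro u ω; rcases hN01 u ω with h | h <;> rw [h, abs_le] <;> constructor <;> linarith
  have hzbd : ∀ u ω, |z u ω| ≤ 1 := by
    intro u ω; rcases hz01 u ω with h | h <;> rw [h] <;> norm_num
  have hNint : ∀ u, Integrable (N u) P := fun u =>
    (integrable_const (1 : ℝ)).mono'
      ((hNmeas u).mono (hFle u) le_rfl).aestronglyMeasurable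
      (Eventually.of_forall fun ω => by
        rcases hN01 u ω with h | h <;> rw [Real.norm_eq_abs, h] <;> norm_num)
  -- f1 is a bounded MDS
  have h1bdd : ∀ u ω, |f1 u ω| ≤ 1 := hNbd
  have h1meas : ∀ u, Measurable[F u] (f1 u) := fun u => (hNmeas u).sub measurable_const
  have h1cond : ∀ u, 1 ≤ u → P[f1 u | F (u - 1)] =ᵐ[P] fun _ => (0 : ℝ) := by
    intro u hu
    have hsub : P[f1 u | F (u - 1)] =ᵐ[P]
        P[N u | F (u - 1)] - P[fun _ => α | F (u - 1)] := by
      have := condExp_sub (m := F (u - 1)) (μ := P) (hNint u) (integrable_const α)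
      exact this
    have hconst : P[fun _ : Ω => α | F (u - 1)] = fun _ => α := condExp_const (hFle _) α
    filter_upwards [hsub, hLAA u hu] with ω hω1 hω2
    rw [hω1]
    simp only [Pi.sub_apply, hω2, hconst]
    ring
  -- f2 is a bounded MDS
  have h2bdd : ∀ u ω, |f2 u ω| ≤ 1 := by
    intro u ω
    rcases Nat.eq_zero_or_pos u with hu | hu
    · simp [hf2, hu]
    · have hne : u ≠ 0 := hu.ne'
      have hval : f2 u ω = (N u ω - α) * z u ω := by simp [hf2, hne]
      rw [hval, abs_mul]
      exact mul_le_one₀ (hNbd u ω) (abs_nonneg _) (hzbd u ω)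
  have h2meas : ∀ u, Measurable[F u] (f2 u) := by
    intro u
    rcases Nat.eq_zero_or_pos u with hu | hu
    · simp only [hf2, hu]; exact measurable_const
    · have hne : u ≠ 0 := Nat.pos_iff_ne_zero.1 hu
      have hzm : Measurable[F u] (z u) :=
        (hzmeas u hu).mono (hFmono (Nat.sub_le u 1)) le_rfl
      have : Measurable[F u] fun ω => (N u ω - α) * z u ω :=
        ((hNmeas u).sub measurable_const).mul hzm
      simpa [hf2, hne] using this
  have h2int : ∀ u, 1 ≤ u → Integrable (fun ω => (N u ω - α) * z u ω) P := fun u hu =>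
    (integrable_const (1 : ℝ)).mono'
      (((((hNmeas u).mono (hFle u) le_rfl).sub measurable_const).mul
        ((hzmeas u hu).mono (hFle _) le_rfl)).aestronglyMeasurable)
      (Eventually.of_forall fun ω => by
        rw [Real.norm_eq_abs, abs_mul]
        exact mul_le_one₀ (hNbd u ω) (abs_nonneg _) (hzbd u ω))
  have h2cond : ∀ u, 1 ≤ u → P[f2 u | F (u - 1)] =ᵐ[P] fun _ => (0 : ℝ) := by
    intro u hu
    have hne : u ≠ 0 := by omega
    have hzsm : StronglyMeasurable[F (u - 1)] (z u) := (hzmeas u hu).stronglyMeasurable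
    have heq : f2 u = fun ω => z u ω * (N u ω - α) := by
      funext ω; simp [hf2, hne]; ring
    have hintzg : Integrable (z u * fun ω => N u ω - α) P := by
      have := h2int u hu
      refine this.congr (Eventually.of_forall fun ω => ?_)
      simp [mul_comm]
    have hpull : P[z u * fun ω => N u ω - α | F (u - 1)] =ᵐ[P]
        z u * P[fun ω => N u ω - α | F (u - 1)] :=
      condExp_mul_of_stronglyMeasurable_left hzsm hintzg ((hNint u).sub (integrable_const α))
    rw [heq]
    have h1c := h1cond u hu
    filter_upwards [hpull, h1c] with ω hω1 hω2
    have hω1' : (P[fun ω => z u ω * (N u ω - α) | F (u - 1)]) ω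
        = z u ω * (P[fun ω => N u ω - α | F (u - 1)]) ω := hω1
    have hω2' : (P[fun ω => N u ω - α | F (u - 1)]) ω = 0 := hω2
    show (P[fun ω => z u ω * (N u ω - α) | F (u - 1)]) ω = 0
    rw [hω1', hω2', mul_zero]
  -- apply the martingale LLN
  have hll1 := basta_mds_lln P F hFmono hFle f1 h1bdd
    (fun u => (hNmeas u).sub measurable_const) h1cond
  have hll2 := basta_mds_lln P F hFmono hFle f2 h2bdd h2meas h2cond
  filter_upwards [hll1, hll2] with ω h1 h2 hz
  -- limits of the numerator and denominator averages
  have hA : Tendsto (fun τ : ℕ => (∑ u ∈ Finset.Icc 1 τ, N u ω * z u ω) / (τ : ℝ))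
      atTop (𝓝 (α * piPA)) := by
    have hsum : ∀ τ : ℕ, (∑ u ∈ Finset.Icc 1 τ, N u ω * z u ω)
        = (∑ u ∈ Finset.Icc 1 τ, f2 u ω) + α * ∑ u ∈ Finset.Icc 1 τ, z u ω := by
      intro τ
      rw [Finset.mul_sum, ← Finset.sum_add_distrib]
      refine Finset.sum_congr rfl fun u hu => ?_
      have hne : u ≠ 0 := by
        have := (Finset.mem_Icc.1 hu).1; omega
      simp only [hf2, if_neg hne]
      ring
    have : Tendsto (fun τ : ℕ => (∑ u ∈ Finset.Icc 1 τ, f2 u ω) / (τ : ℝ)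
        + α * ((∑ u ∈ Finset.Icc 1 τ, z u ω) / (τ : ℝ))) atTop (𝓝 (0 + α * piPA)) :=
      h2.add (hz.const_mul α)
    rw [zero_add] at this
    refine this.congr fun τ => ?_
    rw [hsum, add_div, mul_div_assoc]
  have hB : Tendsto (fun τ : ℕ => (∑ u ∈ Finset.Icc 1 τ, N u ω) / (τ : ℝ))
      atTop (𝓝 α) := by
    have hev : ∀ᶠ τ : ℕ in atTop, (∑ u ∈ Finset.Icc 1 τ, f1 u ω) / (τ : ℝ) + α
        = (∑ u ∈ Finset.Icc 1 τ, N u ω) / (τ : ℝ) := by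
      filter_upwards [eventually_ge_atTop 1] with τ hτ
      have hτ0 : (τ : ℝ) ≠ 0 := by positivity
      have hsum : (∑ u ∈ Finset.Icc 1 τ, f1 u ω)
          = (∑ u ∈ Finset.Icc 1 τ, N u ω) - α * τ := by
        rw [hf1]
        rw [Finset.sum_sub_distrib, Finset.sum_const, Nat.card_Icc]
        simp [mul_comm]
      rw [hsum]
      field_simp
      ring
    have := h1.add (tendsto_const_nhds (x := α))
    rw [zero_add] at this
    exact Tendsto.congr' hev this
  have hratio : Tendsto (fun τ : ℕ => ((∑ u ∈ Finset.Icc 1 τ, N u ω * z u ω) / (τ : ℝ))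
      / ((∑ u ∈ Finset.Icc 1 τ, N u ω) / (τ : ℝ))) atTop (𝓝 (α * piPA / α)) :=
    hA.div hB hα0.ne'
  rw [mul_div_cancel_left₀ _ hα0.ne'] at hratio
  refine hratio.congr' ?_
  filter_upwards [eventually_ge_atTop 1] with τ hτ
  have hτ0 : (τ : ℝ) ≠ 0 := by positivity
  exact basta_div_div _ _ _ hτ0
end

section
/- Let (Ω, F, P) be a probability space carrying random variables Z_prev : Ω → ℕ, N : Ω → {0,1}, and Z : Ω → ℕ such that almost surely Z = Z_prev + N or Z = Z_prev + N − 1. Let π : ℕ → ℝ, α : ℕ → ℝ, β : ℕ → ℝ satisfy for all r, n ∈ ℕ: P(Z_prev = r) = π(r); P(N = 1 | Z_prev = r) = α(r); P(Z = n+1 | Z_prev = n, N = 1) = 1 − β(n); and P(Z = n+1 | Z_prev = n+1, N = 1) = β(n+1). Assume ᾱ := Σ_{k=0}^{∞} α(k) π(k) > 0. Then for every n ≥ 0, P(Z = n+1 | N = 1) = [α(n)(1 − β(n)) π(n) + α(n+1) β(n+1) π(n+1)] / ᾱ. -/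
open MeasureTheory ProbabilityTheory

private lemma cond_mul_toReal {Ω : Type*} [MeasurableSpace Ω] (P : Measure Ω)
    [IsFiniteMeasure P] {s : Set Ω} (t : Set Ω) (hs : MeasurableSet s) :
    ((P[|s]) t).toReal * (P s).toReal = (P (s ∩ t)).toReal := by
  rw [cond_apply hs]
  rcases eq_or_ne (P s) 0 with h0 | h0
  · have h1 : P (s ∩ t) = 0 := measure_mono_null Set.inter_subset_left h0
    simp [h0, h1]
  · have hfin : P s ≠ ⊤ := measure_ne_top P s
    rw [ENNReal.toReal_mul, ENNReal.toReal_inv]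
    have hpos : (P s).toReal ≠ 0 := by
      simp [ENNReal.toReal_eq_zero_iff, h0, hfin]
    field_simp

/-- Lemma 3.5 (LA-DF generalized birth–death queue): with `Z_prev` the state at the
previous slot boundary, `N` the 0-1 arrival indicator, `Z` the next state satisfying
`Z = Z_prev + N` or `Z = Z_prev + N - 1` a.s., stationary distribution `π`,
state-dependent arrival probabilities `α` and service-completion probabilities `β`,
the pre-arrival probability satisfies
`P(Z = n+1 | N = 1) = [α(n)(1-β(n))π(n) + α(n+1)β(n+1)π(n+1)] / ᾱ`
where `ᾱ = ∑_k α(k)π(k)`. -/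
theorem basta_lemma_3_5
    {Ω : Type*} [MeasurableSpace Ω] (P : Measure Ω) [IsProbabilityMeasure P]
    (Zprev Z N : Ω → ℕ)
    (hZprev : Measurable Zprev) (hZ : Measurable Z) (hN : Measurable N)
    (hN01 : ∀ ω, N ω = 0 ∨ N ω = 1)
    (hdyn : ∀ᵐ ω ∂P, Z ω = Zprev ω + N ω ∨ Z ω = Zprev ω + N ω - 1)
    (π α β : ℕ → ℝ)
    (hπ : ∀ r, (P {ω | Zprev ω = r}).toReal = π r)
    (hα : ∀ r, ((P[|{ω | Zprev ω = r}]) {ω | N ω = 1}).toReal = α r)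
    (hβ1 : ∀ n, ((P[|{ω | Zprev ω = n ∧ N ω = 1}]) {ω | Z ω = n + 1}).toReal = 1 - β n)
    (hβ2 : ∀ n, ((P[|{ω | Zprev ω = n + 1 ∧ N ω = 1}]) {ω | Z ω = n + 1}).toReal
      = β (n + 1))
    (αbar : ℝ) (hαbar : αbar = ∑' k, α k * π k) (hαbarpos : 0 < αbar) :
    ∀ n : ℕ, ((P[|{ω | N ω = 1}]) {ω | Z ω = n + 1}).toReal =
      (α n * (1 - β n) * π n + α (n + 1) * β (n + 1) * π (n + 1)) / αbar := by
  intro n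
  have hS : ∀ r : ℕ, MeasurableSet {ω | Zprev ω = r} :=
    fun r => hZprev (measurableSet_singleton r)
  have hT : MeasurableSet {ω | N ω = 1} := hN (measurableSet_singleton 1)
  have hUm : MeasurableSet {ω | Z ω = n + 1} := hZ (measurableSet_singleton (n + 1))
  set T : Set Ω := {ω | N ω = 1} with hTdef
  set U : Set Ω := {ω | Z ω = n + 1} with hUdef
  -- Step A: α r * π r = P(S_r ∩ T)
  have stepA : ∀ r : ℕ, α r * π r = (P ({ω | Zprev ω = r} ∩ T)).toReal := by
    intro r
    rw [← hα r, ← hπ r]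
    exact cond_mul_toReal P T (hS r)
  -- A and B sets
  have hAset : ∀ r : ℕ, {ω | Zprev ω = r ∧ N ω = 1} = {ω | Zprev ω = r} ∩ T := by
    intro r; ext ω; simp [hTdef, Set.mem_inter_iff]
  have hAmeas : ∀ r : ℕ, MeasurableSet {ω | Zprev ω = r ∧ N ω = 1} := by
    intro r; rw [hAset r]; exact (hS r).inter hT
  -- Step B
  have stepB1 : (1 - β n) * (α n * π n)
      = (P ({ω | Zprev ω = n ∧ N ω = 1} ∩ U)).toReal := by
    rw [← hβ1 n, stepA n, ← hAset n]
    exact cond_mul_toReal P U (hAmeas n)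
  have stepB2 : β (n + 1) * (α (n + 1) * π (n + 1))
      = (P ({ω | Zprev ω = n + 1 ∧ N ω = 1} ∩ U)).toReal := by
    rw [← hβ2 n, stepA (n + 1), ← hAset (n + 1)]
    exact cond_mul_toReal P U (hAmeas (n + 1))
  -- Step C: P T = ∑' r, P (S_r ∩ T)
  have hTunion : T = ⋃ r : ℕ, ({ω | Zprev ω = r} ∩ T) := by
    ext ω
    simp only [Set.mem_iUnion, Set.mem_inter_iff, Set.mem_setOf_eq]
    exact ⟨fun h => ⟨Zprev ω, rfl, h⟩, fun ⟨r, _, h⟩ => h⟩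
  have stepC : P T = ∑' r : ℕ, P ({ω | Zprev ω = r} ∩ T) := by
    conv_lhs => rw [hTunion]
    refine measure_iUnion ?_ (fun r => (hS r).inter hT)
    intro i j hij
    simp only [Function.onFun]
    rw [Set.disjoint_left]
    rintro ω ⟨hi, -⟩ ⟨hj, -⟩
    exact hij (hi.symm.trans hj)
  -- Step D: (P T).toReal = αbar
  have stepD : (P T).toReal = αbar := by
    rw [stepC, ENNReal.tsum_toReal_eq (fun r => measure_ne_top _ _), hαbar]
    exact tsum_congr fun r => (stepA r).symm
  -- Step E: split T ∩ U
  have stepE : P (T ∩ U) = P ({ω | Zprev ω = n ∧ N ω = 1} ∩ U)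
      + P ({ω | Zprev ω = n + 1 ∧ N ω = 1} ∩ U) := by
    have hae : (T ∩ U : Set Ω) =ᵐ[P]
        ((({ω | Zprev ω = n ∧ N ω = 1} : Set Ω) ∩ U)
          ∪ (({ω | Zprev ω = n + 1 ∧ N ω = 1} : Set Ω) ∩ U) : Set Ω) := by
      rw [Filter.eventuallyEq_set]
      filter_upwards [hdyn] with ω hω
      simp only [Set.mem_inter_iff, Set.mem_union, Set.mem_setOf_eq, hTdef, hUdef]
      constructor
      · rintro ⟨hN1, hZω⟩
        rcases hω with h | h <;> [left; right] <;>
          exact ⟨⟨by omega, hN1⟩, hZω⟩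
      · rintro (⟨⟨-, hN1⟩, hZω⟩ | ⟨⟨-, hN1⟩, hZω⟩) <;> exact ⟨hN1, hZω⟩
    rw [measure_congr hae]
    refine measure_union ?_ ((hAmeas (n + 1)).inter hUm)
    rw [Set.disjoint_left]
    rintro ω ⟨⟨h1, -⟩, -⟩ ⟨⟨h2, -⟩, -⟩
    omega
  -- conclude
  rw [cond_apply hT, ENNReal.toReal_mul, ENNReal.toReal_inv, stepD, stepE,
    ENNReal.toReal_add (measure_ne_top _ _) (measure_ne_top _ _),
    ← stepB1, ← stepB2, div_eq_inv_mul]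
  ring
end

section
/- Let (Ω, F, P) be a probability space carrying random variables Z_prev : Ω → ℕ, N : Ω → {0,1}, and Z : Ω → ℕ such that almost surely Z = Z_prev + N or Z = Z_prev + N − 1. Let α ∈ (0,1) and π, β : ℕ → ℝ satisfy for all r, n ∈ ℕ: P(Z_prev = r) = π(r); P(N = 1 | Z_prev = r) = α; P(Z = n+1 | Z_prev = n, N = 1) = 1 − β(n); P(Z = n+1 | Z_prev = n+1, N = 1) = β(n+1); and Σ_{k=0}^{∞} π(k) = 1. Then for every n ≥ 0, P(Z = n+1 | N = 1) = (1 − β(n)) π(n) + β(n+1) π(n+1). -/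
open MeasureTheory ProbabilityTheory

/-- Equation (7), the state-independent-arrivals special case of Lemma 3.5 for the
LA-DF generalized birth–death queue: with Bernoulli arrivals of constant probability `α`,
the pre-arrival probability that an arrival sees `n` customers equals
`(1 - β(n)) π(n) + β(n+1) π(n+1)`. -/
theorem basta_lemma_3_5_state_independent
    {Ω : Type*} [MeasurableSpace Ω] (P : Measure Ω) [IsProbabilityMeasure P]
    (Zprev Z N : Ω → ℕ)
    (hZprev : Measurable Zprev) (hZ : Measurable Z) (hN : Measurable N)
    (hN01 : ∀ ω, N ω = 0 ∨ N ω = 1)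
    (hdyn : ∀ᵐ ω ∂P, Z ω = Zprev ω + N ω ∨ Z ω = Zprev ω + N ω - 1)
    (α : ℝ) (hα0 : 0 < α) (hα1 : α < 1)
    (π β : ℕ → ℝ)
    (hπ : ∀ r, (P {ω | Zprev ω = r}).toReal = π r)
    (hα : ∀ r, ((P[|{ω | Zprev ω = r}]) {ω | N ω = 1}).toReal = α)
    (hβ1 : ∀ n, ((P[|{ω | Zprev ω = n ∧ N ω = 1}]) {ω | Z ω = n + 1}).toReal = 1 - β n)
    (hβ2 : ∀ n, ((P[|{ω | Zprev ω = n + 1 ∧ N ω = 1}]) {ω | Z ω = n + 1}).toReal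
      = β (n + 1))
    (hsum : ∑' k, π k = 1) :
    ∀ n : ℕ, ((P[|{ω | N ω = 1}]) {ω | Z ω = n + 1}).toReal =
      (1 - β n) * π n + β (n + 1) * π (n + 1) := by
  intro n
  set A : ℕ → Set Ω := fun r => {ω | Zprev ω = r} with hA
  set E : Set Ω := {ω | N ω = 1} with hE
  set B : Set Ω := {ω | Z ω = n + 1} with hB
  have hAm : ∀ r, MeasurableSet (A r) := fun r => hZprev (measurableSet_singleton r)
  have hEm : MeasurableSet E := hN (measurableSet_singleton 1)
  have hBm : MeasurableSet B := hZ (measurableSet_singleton (n + 1))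
  -- P (A r) ≠ 0
  have hAne : ∀ r, P (A r) ≠ 0 := by
    intro r h0
    have := hα r
    rw [cond_apply (hAm r)] at this
    have hle : P (A r ∩ E) = 0 :=
      le_antisymm (h0 ▸ measure_mono Set.inter_subset_left) zero_le
    rw [hle, mul_zero] at this
    simp at this
    exact absurd this.symm (ne_of_gt hα0)
  have hAfin : ∀ r, P (A r) ≠ ⊤ := fun r => measure_ne_top P _
  have hπpos : ∀ r, 0 < π r := by
    intro r
    rw [← hπ r]
    exact ENNReal.toReal_pos (hAne r) (hAfin r)
  -- P (A r ∩ E) in real terms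
  have hAE : ∀ r, (P (A r ∩ E)).toReal = α * π r := by
    intro r
    have := hα r
    rw [cond_apply (hAm r), ENNReal.toReal_mul, ENNReal.toReal_inv, hπ r] at this
    have hπr := (hπpos r).ne'
    field_simp at this
    linarith [this]
  have hAEne : ∀ r, P (A r ∩ E) ≠ 0 := by
    intro r h0
    have := hAE r
    rw [h0] at this
    simp at this
    rcases this with h | h
    · exact absurd h (ne_of_gt hα0)
    · exact absurd h (ne_of_gt (hπpos r))
  -- the two β-quantities
  have hAEB1 : (P (A n ∩ E ∩ B)).toReal = (1 - β n) * (α * π n) := by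
    have := hβ1 n
    rw [show {ω | Zprev ω = n ∧ N ω = 1} = A n ∩ E from rfl,
      cond_apply ((hAm n).inter hEm), ENNReal.toReal_mul, ENNReal.toReal_inv, hAE n] at this
    have hne : α * π n ≠ 0 := mul_ne_zero hα0.ne' (hπpos n).ne'
    field_simp at this
    rw [div_eq_iff (hπpos n).ne'] at this
    linarith [this]
  have hAEB2 : (P (A (n+1) ∩ E ∩ B)).toReal = β (n+1) * (α * π (n+1)) := by
    have := hβ2 n
    rw [show {ω | Zprev ω = n + 1 ∧ N ω = 1} = A (n+1) ∩ E from rfl,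
      cond_apply ((hAm (n+1)).inter hEm), ENNReal.toReal_mul, ENNReal.toReal_inv,
      hAE (n+1)] at this
    have hne : α * π (n+1) ≠ 0 := mul_ne_zero hα0.ne' (hπpos (n+1)).ne'
    field_simp at this
    rw [div_eq_iff (hπpos (n+1)).ne'] at this
    linarith [this]
  -- P E = α
  have hPE : (P E).toReal = α := by
    have hdisj : Pairwise (Function.onFun Disjoint fun r => A r ∩ E) := by
      intro r s hrs
      refine Set.disjoint_left.2 ?_
      rintro ω ⟨h1, _⟩ ⟨h2, _⟩
      exact hrs (h1.symm.trans h2)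
    have hEeq : E = ⋃ r, A r ∩ E := by
      ext ω
      simp only [Set.mem_iUnion, Set.mem_inter_iff]
      constructor
      · intro h; exact ⟨Zprev ω, rfl, h⟩
      · rintro ⟨r, _, h⟩; exact h
    have := measure_iUnion (μ := P) hdisj (fun r => (hAm r).inter hEm)
    rw [← hEeq] at this
    rw [this, ENNReal.tsum_toReal_eq (fun r => measure_ne_top P _)]
    calc (∑' r, (P (A r ∩ E)).toReal) = ∑' r, α * π r := by
          exact tsum_congr hAE
      _ = α * ∑' r, π r := tsum_mul_left
      _ = α := by rw [hsum, mul_one]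
  have hPEne : P E ≠ 0 := by
    intro h0
    rw [h0] at hPE
    simp at hPE
    exact absurd hPE.symm (ne_of_gt hα0)
  -- decomposition of E ∩ B
  have hdecomp : P (E ∩ B) = P (A n ∩ E ∩ B) + P (A (n+1) ∩ E ∩ B) := by
    have hae : (E ∩ B : Set Ω) =ᵐ[P] ((A n ∩ E ∩ B) ∪ (A (n+1) ∩ E ∩ B) : Set Ω) := by
      rw [Filter.eventuallyEq_set]
      filter_upwards [hdyn] with ω hω
      simp only [Set.mem_inter_iff, Set.mem_union, hA, hE, hB, Set.mem_setOf_eq]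
      constructor
      · rintro ⟨hN1, hZn⟩
        rcases hω with h | h <;> rw [hN1] at h <;> omega
      · rintro (⟨⟨_, h1⟩, h2⟩ | ⟨⟨_, h1⟩, h2⟩) <;> exact ⟨h1, h2⟩
    rw [measure_congr hae]
    apply measure_union _ (((hAm (n+1)).inter hEm).inter hBm)
    refine Set.disjoint_left.2 ?_
    rintro ω ⟨⟨h1, _⟩, _⟩ ⟨⟨h2, _⟩, _⟩
    simp only [hA, Set.mem_setOf_eq] at h1 h2
    omega
  -- finish
  rw [cond_apply hEm, ENNReal.toReal_mul, ENNReal.toReal_inv, hPE]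
  have : (P (E ∩ B)).toReal = (1 - β n) * (α * π n) + β (n+1) * (α * π (n+1)) := by
    rw [hdecomp, ENNReal.toReal_add (measure_ne_top P _) (measure_ne_top P _), hAEB1, hAEB2]
  rw [this]
  field_simp
end
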